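/- arXiv:2605.01646 — 4 statements merged into one kernel-verified Lean document; each statement's English description precedes it below -/
import Mathlib

section
/- In the polynomial ring ℂ[z₁, z₂, z₃], define the differential operators P = −2π(∂₁∂₂ − i∂₁∂₃) + (1/(8π))(z₁z₂ − i z₁z₃) and Q = −2π(∂₁∂₂ + i∂₁∂₃) + (1/(8π))(z₁z₂ + i z₁z₃), where ∂ⱼ = ∂/∂zⱼ. Then for every natural number b, P(Q(z₁^b)) = −((b+1)/2)·z₁^b + (1/(64π²))·z₁^{b+2}(z₂² + z₃²). -/
open MvPolynomial Real

/-- The operator `P = −2π(∂₁∂₂ − i∂₁∂₃) + (1/(8π))(z₁z₂ − i z₁z₃)` on `ℂ[z₁,z₂,z₃]`. -/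
noncomputable def fockP (f : MvPolynomial (Fin 3) ℂ) : MvPolynomial (Fin 3) ℂ :=
  C (-(2 * (π : ℂ))) * (pderiv 0 (pderiv 1 f) - C Complex.I * pderiv 0 (pderiv 2 f)) +
    C (1 / (8 * (π : ℂ))) * (X 0 * X 1 - C Complex.I * (X 0 * X 2)) * f

/-- The operator `Q = −2π(∂₁∂₂ + i∂₁∂₃) + (1/(8π))(z₁z₂ + i z₁z₃)` on `ℂ[z₁,z₂,z₃]`. -/
noncomputable def fockQ (f : MvPolynomial (Fin 3) ℂ) : MvPolynomial (Fin 3) ℂ :=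
  C (-(2 * (π : ℂ))) * (pderiv 0 (pderiv 1 f) + C Complex.I * pderiv 0 (pderiv 2 f)) +
    C (1 / (8 * (π : ℂ))) * (X 0 * X 1 + C Complex.I * (X 0 * X 2)) * f

lemma pderiv0_pow (n : ℕ) :
    pderiv 0 ((X 0 : MvPolynomial (Fin 3) ℂ) ^ (n + 1)) = C ((n : ℂ) + 1) * X 0 ^ n := by
  rw [Derivation.leibniz_pow, pderiv_X_self]
  simp [nsmul_eq_mul]

/-- `P(Q(z₁^b)) = −((b+1)/2)·z₁^b + (1/(64π²))·z₁^{b+2}(z₂² + z₃²)`. -/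
theorem fockP_fockQ_pow (b : ℕ) :
    fockP (fockQ ((X 0 : MvPolynomial (Fin 3) ℂ) ^ b)) =
      C (-(((b : ℂ) + 1) / 2)) * X 0 ^ b +
        C (1 / (64 * (π : ℂ) ^ 2)) * (X 0 ^ (b + 2) * (X 1 ^ 2 + X 2 ^ 2)) := by
  have hπ : (π : ℂ) ≠ 0 := by exact_mod_cast Real.pi_ne_zero
  have hQ : fockQ ((X 0 : MvPolynomial (Fin 3) ℂ) ^ b) =
      C (1 / (8 * (π : ℂ))) * (X 0 ^ (b + 1) * X 1 + C Complex.I * (X 0 ^ (b + 1) * X 2)) := by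
    unfold fockQ
    have h1 : pderiv 1 ((X 0 : MvPolynomial (Fin 3) ℂ) ^ b) = 0 := by
      rw [Derivation.leibniz_pow, pderiv_X_of_ne (by decide : (0:Fin 3) ≠ 1)]; simp
    have h2 : pderiv 2 ((X 0 : MvPolynomial (Fin 3) ℂ) ^ b) = 0 := by
      rw [Derivation.leibniz_pow, pderiv_X_of_ne (by decide : (0:Fin 3) ≠ 2)]; simp
    rw [h1, h2]
    simp only [map_zero, mul_zero, add_zero, zero_add]
    ring
  rw [hQ]
  unfold fockP
  have hd1 : pderiv 1 (C (1 / (8 * (π : ℂ))) * ((X 0 : MvPolynomial (Fin 3) ℂ) ^ (b + 1) * X 1 +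
      C Complex.I * (X 0 ^ (b + 1) * X 2))) = C (1 / (8 * (π : ℂ))) * X 0 ^ (b + 1) := by
    simp [pderiv_X_of_ne (by decide : (0:Fin 3) ≠ 1), pderiv_X_of_ne (by decide : (2:Fin 3) ≠ 1),
      Derivation.leibniz_pow]
  have hd2 : pderiv 2 (C (1 / (8 * (π : ℂ))) * ((X 0 : MvPolynomial (Fin 3) ℂ) ^ (b + 1) * X 1 +
      C Complex.I * (X 0 ^ (b + 1) * X 2))) =
      C (1 / (8 * (π : ℂ))) * (C Complex.I * X 0 ^ (b + 1)) := by
    simp [pderiv_X_of_ne (by decide : (0:Fin 3) ≠ 2), pderiv_X_of_ne (by decide : (1:Fin 3) ≠ 2),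
      Derivation.leibniz_pow]
  rw [hd1, hd2]
  simp only [pderiv_C_mul, pderiv0_pow]
  have hI : (C Complex.I : MvPolynomial (Fin 3) ℂ) ^ 2 = -1 := by
    rw [← C_pow, Complex.I_sq]; simp
  have hC1 : (C ((-(2 * (π:ℂ))) * (1 / (8 * (π:ℂ))) * (((b:ℂ) + 1) * 2)) :
      MvPolynomial (Fin 3) ℂ) = C (-(((b : ℂ) + 1) / 2)) := by
    congr 1; field_simp; ring
  have hC2 : (C ((1 / (8 * (π:ℂ))) * (1 / (8 * (π:ℂ)))) : MvPolynomial (Fin 3) ℂ) =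
      C (1 / (64 * (π : ℂ) ^ 2)) := by
    congr 1; field_simp; ring
  simp only [map_mul, map_neg, map_one, map_ofNat, map_div₀] at hC1 hC2 ⊢
  linear_combination (X 0 ^ b : MvPolynomial (Fin 3) ℂ) * hC1 +
    (X 0 ^ (b + 2) * (X 1 ^ 2 + X 2 ^ 2) : MvPolynomial (Fin 3) ℂ) * hC2 +
    (2 * C ((π:ℂ)) * C (1/(8*(π:ℂ))) * X 0 ^ b * C ((b:ℂ)+1) -
      C (1/(8*(π:ℂ)))^2 * X 0 ^ (b+2) * X 2 ^ 2 : MvPolynomial (Fin 3) ℂ) * hI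
end

section
/- In the polynomial ring ℂ[z'₁, z'₂, z''₁, z''₂], define the operators ∂' = −4π·(∂/∂z'₁)(∂/∂z''₂) + (1/(4π))·z''₁z'₂ and ∂̄' = −4π·(∂/∂z''₁)(∂/∂z'₂) + (1/(4π))·z'₁z''₂. Then for all natural numbers b', b'', ∂'(∂̄'((z'₁)^{b'}(z''₁)^{b''})) = −(b'+1)·(z'₁)^{b'}(z''₁)^{b''} + (1/(16π²))·(z'₁)^{b'+1}(z''₁)^{b''+1}·z'₂z''₂. -/
open MvPolynomial Real

/- Variables: `0 = z'₁`, `1 = z'₂`, `2 = z''₁`, `3 = z''₂` in `ℂ[z'₁, z'₂, z''₁, z''₂]`. -/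

/-- The operator `∂' = −4π·(∂/∂z'₁)(∂/∂z''₂) + (1/(4π))·z''₁z'₂`. -/
noncomputable def fockDer (f : MvPolynomial (Fin 4) ℂ) : MvPolynomial (Fin 4) ℂ :=
  C (-(4 * (π : ℂ))) * pderiv 0 (pderiv 3 f) + C (1 / (4 * (π : ℂ))) * (X 2 * X 1) * f

/-- The operator `∂̄' = −4π·(∂/∂z''₁)(∂/∂z'₂) + (1/(4π))·z'₁z''₂`. -/
noncomputable def fockDerBar (f : MvPolynomial (Fin 4) ℂ) : MvPolynomial (Fin 4) ℂ :=
  C (-(4 * (π : ℂ))) * pderiv 2 (pderiv 1 f) + C (1 / (4 * (π : ℂ))) * (X 0 * X 3) * f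

/-- `∂'(∂̄'((z'₁)^{b'}(z''₁)^{b''})) = −(b'+1)·(z'₁)^{b'}(z''₁)^{b''}
+ (1/(16π²))·(z'₁)^{b'+1}(z''₁)^{b''+1}·z'₂z''₂`. -/
theorem fockDer_fockDerBar_pow (b' b'' : ℕ) :
    fockDer (fockDerBar ((X 0 : MvPolynomial (Fin 4) ℂ) ^ b' * X 2 ^ b'')) =
      C (-((b' : ℂ) + 1)) * (X 0 ^ b' * X 2 ^ b'') +
        C (1 / (16 * (π : ℂ) ^ 2)) * (X 0 ^ (b' + 1) * X 2 ^ (b'' + 1) * (X 1 * X 3)) := by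
  have hπ : (π : ℂ) ≠ 0 := by exact_mod_cast Real.pi_ne_zero
  set c : ℂ := 1 / (4 * (π : ℂ)) with hc
  have hd1 : pderiv 1 ((X 0 : MvPolynomial (Fin 4) ℂ) ^ b' * X 2 ^ b'') = 0 := by
    simp [pderiv_mul, pderiv_pow, pderiv_X_of_ne (show (0:Fin 4) ≠ 1 by decide),
      pderiv_X_of_ne (show (2:Fin 4) ≠ 1 by decide)]
  have hbar : fockDerBar ((X 0 : MvPolynomial (Fin 4) ℂ) ^ b' * X 2 ^ b'')
      = C c * (X 0 ^ (b' + 1) * X 2 ^ b'' * X 3) := by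
    rw [fockDerBar, hd1]; simp only [map_zero, mul_zero, zero_add]; ring
  rw [hbar, fockDer]
  have hd3 : pderiv 3 (C c * ((X 0 : MvPolynomial (Fin 4) ℂ) ^ (b' + 1) * X 2 ^ b'' * X 3))
      = C c * (X 0 ^ (b' + 1) * X 2 ^ b'') := by
    simp [pderiv_C_mul, pderiv_mul, pderiv_pow, pderiv_X_self,
      pderiv_X_of_ne (show (0:Fin 4) ≠ 3 by decide),
      pderiv_X_of_ne (show (2:Fin 4) ≠ 3 by decide)]
  rw [hd3]
  have hd0 : pderiv 0 (C c * ((X 0 : MvPolynomial (Fin 4) ℂ) ^ (b' + 1) * X 2 ^ b''))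
      = C (c * ((b' : ℂ) + 1)) * (X 0 ^ b' * X 2 ^ b'') := by
    simp [pderiv_C_mul, pderiv_mul, pderiv_pow, pderiv_X_self,
      pderiv_X_of_ne (show (2:Fin 4) ≠ 0 by decide)]
    ring
  rw [hd0, ← hc]
  have h1 : (C (-(4 * (π : ℂ))) : MvPolynomial (Fin 4) ℂ) * C (c * ((b' : ℂ) + 1)) = C (-((b' : ℂ) + 1)) := by
    rw [← C_mul]; congr 1; rw [hc]; field_simp
  have h2 : (C c : MvPolynomial (Fin 4) ℂ) * C c = C (1 / (16 * (π : ℂ) ^ 2)) := by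
    rw [← C_mul]; congr 1; rw [hc]; ring
  rw [← h1, ← h2]
  ring
end

section
/- Let b be a positive natural number and let S_b act on ℚ^b-indexed tensor powers. For the Young symmetrizer y_λ = a_λ · b_λ ∈ ℚ[S_b] associated to a partition λ of b (row symmetrizer a_λ times column antisymmetrizer b_λ for the standard filling), there exists a nonzero rational number c_λ such that (c_λ · y_λ)² = c_λ · y_λ; that is, a suitable rational multiple π_λ of the Young symmetrizer is an idempotent in ℚ[S_b]. -/
open Finset

namespace YoungSymAux

variable {b : ℕ} {f : Fin b → ℕ × ℕ} {Y : YoungDiagram}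

theorem colcard (hinj : Function.Injective f)
    (hY : ∀ p, p ∈ Y.cells ↔ ∃ x, f x = p) (j : ℕ) :
    (univ.filter fun x => (f x).2 = j).card = Y.colLen j := by
  classical
  rw [Y.colLen_eq_card]
  apply Finset.card_bij (fun x _ => f x)
  · intro x hx
    rw [YoungDiagram.mem_col_iff]
    refine ⟨(Y.mem_cells _).mp ((hY _).mpr ⟨x, rfl⟩), (Finset.mem_filter.mp hx).2⟩
  · intro x _ y _ h; exact hinj h
  · intro p hp
    rw [YoungDiagram.mem_col_iff] at hp
    obtain ⟨x, rfl⟩ := (hY p).mp ((Y.mem_cells p).mpr hp.1)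
    exact ⟨x, Finset.mem_filter.mpr ⟨Finset.mem_univ _, hp.2⟩, rfl⟩

theorem rowcard (hinj : Function.Injective f)
    (hY : ∀ p, p ∈ Y.cells ↔ ∃ x, f x = p) (n : ℕ) :
    (univ.filter fun x => (f x).1 ≤ n).card = ∑ i ∈ range (n + 1), Y.rowLen i := by
  classical
  have h1 : (univ.filter fun x => (f x).1 ≤ n).card
      = (Y.cells.filter fun p => p.1 ≤ n).card := by
    apply Finset.card_bij (fun x _ => f x)
    · intro x hx
      exact Finset.mem_filter.mpr ⟨(hY _).mpr ⟨x, rfl⟩, (Finset.mem_filter.mp hx).2⟩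
    · intro x _ y _ h; exact hinj h
    · intro p hp
      obtain ⟨x, rfl⟩ := (hY p).mp (Finset.mem_filter.mp hp).1
      exact ⟨x, Finset.mem_filter.mpr ⟨Finset.mem_univ _, (Finset.mem_filter.mp hp).2⟩, rfl⟩
  have h2 : Y.cells.filter (fun p => p.1 ≤ n) = (range (n + 1)).biUnion (fun i => Y.row i) := by
    ext p
    simp only [Finset.mem_filter, Finset.mem_biUnion, Finset.mem_range,
      YoungDiagram.mem_row_iff, Nat.lt_succ_iff, YoungDiagram.mem_cells]
    constructor
    · rintro ⟨h, h'⟩; exact ⟨p.1, h', h, rfl⟩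
    · rintro ⟨i, hi, h, rfl⟩; exact ⟨h, hi⟩
  have h3 : ∀ i ∈ range (n+1), ∀ i' ∈ range (n+1), i ≠ i' →
      Disjoint (Y.row i) (Y.row i') := by
    intro i _ i' _ hne
    refine Finset.disjoint_left.mpr fun p hp hp' => hne ?_
    rw [YoungDiagram.mem_row_iff] at hp hp'
    rw [← hp.2, hp'.2]
  rw [h1, h2, Finset.card_biUnion h3]
  exact Finset.sum_congr rfl fun i _ => (Y.rowLen_eq_card).symm

theorem colsum (hY : ∀ p, p ∈ Y.cells ↔ ∃ x, f x = p)
    (n : ℕ) (J : Finset ℕ) (hJ : ∀ p ∈ Y.cells, p.2 ∈ J) :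
    ∑ j ∈ J, min (Y.colLen j) (n + 1) = ∑ i ∈ range (n + 1), Y.rowLen i := by
  classical
  have hcard : ∀ j : ℕ, ((Y.col j).filter fun p => p.1 ≤ n).card = min (Y.colLen j) (n+1) := by
    intro j
    have : (Y.col j).filter (fun p => p.1 ≤ n)
        = (range (min (Y.colLen j) (n+1))) ×ˢ ({j} : Finset ℕ) := by
      rw [YoungDiagram.col_eq_prod]
      ext p
      simp only [Finset.mem_filter, Finset.mem_product, Finset.mem_range, Finset.mem_singleton,
        lt_min_iff, Nat.lt_succ_iff]
      tauto
    rw [this, Finset.card_product, Finset.card_range, Finset.card_singleton, mul_one]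
  have h2 : Y.cells.filter (fun p => p.1 ≤ n)
      = J.biUnion (fun j => (Y.col j).filter fun p => p.1 ≤ n) := by
    ext p
    simp only [Finset.mem_filter, Finset.mem_biUnion, YoungDiagram.mem_col_iff,
      YoungDiagram.mem_cells]
    constructor
    · rintro ⟨h, h'⟩; exact ⟨p.2, hJ p ((Y.mem_cells p).mpr h), ⟨h, rfl⟩, h'⟩
    · rintro ⟨j, _, ⟨h, _⟩, h'⟩; exact ⟨h, h'⟩
  have h3 : ∀ j ∈ J, ∀ j' ∈ J, j ≠ j' →
      Disjoint ((Y.col j).filter fun p => p.1 ≤ n) ((Y.col j').filter fun p => p.1 ≤ n) := by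
    intro j _ j' _ hne
    refine Finset.disjoint_left.mpr fun p hp hp' => hne ?_
    rw [Finset.mem_filter, YoungDiagram.mem_col_iff] at hp hp'
    rw [← hp.1.2, hp'.1.2]
  have h4 : (Y.cells.filter fun p => p.1 ≤ n).card = ∑ i ∈ range (n + 1), Y.rowLen i := by
    have h2' : Y.cells.filter (fun p => p.1 ≤ n) = (range (n + 1)).biUnion (fun i => Y.row i) := by
      ext p
      simp only [Finset.mem_filter, Finset.mem_biUnion, Finset.mem_range,
        YoungDiagram.mem_row_iff, Nat.lt_succ_iff, YoungDiagram.mem_cells]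
      constructor
      · rintro ⟨h, h'⟩; exact ⟨p.1, h', h, rfl⟩
      · rintro ⟨i, hi, h, rfl⟩; exact ⟨h, hi⟩
    have h3' : ∀ i ∈ range (n+1), ∀ i' ∈ range (n+1), i ≠ i' →
        Disjoint (Y.row i) (Y.row i') := by
      intro i _ i' _ hne
      refine Finset.disjoint_left.mpr fun p hp hp' => hne ?_
      rw [YoungDiagram.mem_row_iff] at hp hp'
      rw [← hp.2, hp'.2]
    rw [h2', Finset.card_biUnion h3']
    exact Finset.sum_congr rfl fun i _ => (Y.rowLen_eq_card).symm
  calc ∑ j ∈ J, min (Y.colLen j) (n + 1)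
      = ∑ j ∈ J, ((Y.col j).filter fun p => p.1 ≤ n).card :=
        Finset.sum_congr rfl fun j _ => (hcard j).symm
    _ = (Y.cells.filter fun p => p.1 ≤ n).card := by rw [h2, Finset.card_biUnion h3]
    _ = _ := h4

/-- Key combinatorial lemma: if `x ↦ (row x, col (u x))` is injective, then each such pair
is a cell of the Young diagram. -/
theorem key_comb (hinj : Function.Injective f)
    (hY : ∀ p, p ∈ Y.cells ↔ ∃ x, f x = p) (u : Equiv.Perm (Fin b))
    (hα : ∀ x y : Fin b, (f x).1 = (f y).1 → (f (u x)).2 = (f (u y)).2 → x = y)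
    (x : Fin b) : ((f x).1, (f (u x)).2) ∈ Y := by
  classical
  set J : Finset ℕ := univ.image (fun x => (f x).2) with hJdef
  have hJ : ∀ p ∈ Y.cells, p.2 ∈ J := by
    intro p hp
    obtain ⟨x, rfl⟩ := (hY p).mp hp
    exact Finset.mem_image.mpr ⟨x, Finset.mem_univ _, rfl⟩
  set F : ℕ → ℕ → Finset (Fin b) :=
    fun n j => univ.filter (fun x => (f x).1 ≤ n ∧ (f (u x)).2 = j) with hFdef
  have hF1 : ∀ n j, (F n j).card ≤ Y.colLen j := by
    intro n j
    have hsub : F n j ⊆ univ.filter (fun x => (f (u x)).2 = j) := by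
      intro x hx
      exact Finset.mem_filter.mpr ⟨Finset.mem_univ _, (Finset.mem_filter.mp hx).2.2⟩
    refine le_trans (Finset.card_le_card hsub) (le_of_eq ?_)
    rw [← colcard hinj hY j]
    apply Finset.card_bij (fun x _ => u x)
    · intro x hx
      exact Finset.mem_filter.mpr ⟨Finset.mem_univ _, (Finset.mem_filter.mp hx).2⟩
    · intro x _ y _ h; exact u.injective h
    · intro y hy
      refine ⟨u.symm y, Finset.mem_filter.mpr ⟨Finset.mem_univ _, ?_⟩, u.apply_symm_apply y⟩
      rw [u.apply_symm_apply]; exact (Finset.mem_filter.mp hy).2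
  have hF2 : ∀ n j, (F n j).card ≤ n + 1 := by
    intro n j
    have hmap : ∀ a ∈ F n j, (f a).1 ∈ range (n+1) := fun a ha =>
      Finset.mem_range.mpr (Nat.lt_succ_of_le (Finset.mem_filter.mp ha).2.1)
    have hinj' : Set.InjOn (fun x => (f x).1) (F n j) := by
      intro a ha a' ha' h
      refine hα a a' h ?_
      rw [(Finset.mem_filter.mp (Finset.mem_coe.mp ha)).2.2,
        (Finset.mem_filter.mp (Finset.mem_coe.mp ha')).2.2]
    simpa using Finset.card_le_card_of_injOn _ hmap hinj'
  have hF3 : ∀ n, ∑ j ∈ J, (F n j).card = (univ.filter fun x => (f x).1 ≤ n).card := by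
    intro n
    have hcover : univ.filter (fun x : Fin b => (f x).1 ≤ n) = J.biUnion (F n) := by
      ext z
      constructor
      · intro h
        have h' := (Finset.mem_filter.mp h).2
        exact Finset.mem_biUnion.mpr ⟨(f (u z)).2,
          Finset.mem_image.mpr ⟨u z, Finset.mem_univ _, rfl⟩,
          Finset.mem_filter.mpr ⟨Finset.mem_univ _, h', rfl⟩⟩
      · intro h
        obtain ⟨j, _, hz⟩ := Finset.mem_biUnion.mp h
        exact Finset.mem_filter.mpr ⟨Finset.mem_univ _, (Finset.mem_filter.mp hz).2.1⟩
    have hdisj : ∀ j ∈ J, ∀ j' ∈ J, j ≠ j' → Disjoint (F n j) (F n j') := by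
      intro j _ j' _ hne
      refine Finset.disjoint_left.mpr fun z hz hz' => hne ?_
      rw [← (Finset.mem_filter.mp hz).2.2, (Finset.mem_filter.mp hz').2.2]
    rw [hcover, Finset.card_biUnion hdisj]
  have hF4 : ∀ n, ∀ j ∈ J, (F n j).card = min (Y.colLen j) (n + 1) := by
    intro n
    have hsum : ∑ j ∈ J, (F n j).card = ∑ j ∈ J, min (Y.colLen j) (n + 1) := by
      rw [hF3 n, rowcard hinj hY n, colsum hY n J hJ]
    exact fun j hj => (Finset.sum_eq_sum_iff_of_le
      (fun j _ => le_min (hF1 n j) (hF2 n j))).mp hsum j hj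
  -- now conclude
  set i := (f x).1 with hi
  set j := (f (u x)).2 with hj
  have hjJ : j ∈ J := Finset.mem_image.mpr ⟨u x, Finset.mem_univ _, rfl⟩
  have hxF : x ∈ F i j := Finset.mem_filter.mpr ⟨Finset.mem_univ _, le_refl _, rfl⟩
  rw [YoungDiagram.mem_iff_lt_colLen]
  rcases Nat.eq_zero_or_pos i with h0 | hpos
  · have h1 : 1 ≤ (F i j).card := Finset.card_pos.mpr ⟨x, hxF⟩
    rw [hF4 i j hjJ] at h1
    exact lt_of_lt_of_le (h0 ▸ Nat.lt_of_lt_of_le Nat.zero_lt_one (le_min_iff.mp h1).1)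
      (le_refl _)
  · obtain ⟨m, hm⟩ : ∃ m, i = m + 1 := ⟨i - 1, (Nat.succ_pred_eq_of_pos hpos).symm⟩
    by_contra hcon
    push_neg at hcon
    have hle : Y.colLen j ≤ i := hcon
    have hsub : F m j ⊆ F i j := by
      intro z hz
      rcases Finset.mem_filter.mp hz with ⟨_, hz1, hz2⟩
      exact Finset.mem_filter.mpr ⟨Finset.mem_univ _, le_trans hz1 (by omega), hz2⟩
    have hxnot : x ∉ F m j := by
      intro hx
      have := (Finset.mem_filter.mp hx).2.1
      omega
    have hlt : (F m j).card < (F i j).card :=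
      Finset.card_lt_card (Finset.ssubset_iff_of_subset hsub |>.mpr ⟨x, hxF, hxnot⟩)
    rw [hF4 m j hjJ, hF4 i j hjJ] at hlt
    omega

/-- If there is no pair in the same row of `T` and same column of `gT`, then `g = p * q`
with `p` row-preserving and `q` column-preserving. -/
theorem decomp (hinj : Function.Injective f)
    (hY : ∀ p, p ∈ Y.cells ↔ ∃ x, f x = p) (g : Equiv.Perm (Fin b))
    (h : ¬ ∃ x y : Fin b, x ≠ y ∧ (f x).1 = (f y).1 ∧ (f (g⁻¹ x)).2 = (f (g⁻¹ y)).2) :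
    ∃ p q : Equiv.Perm (Fin b), (∀ x, (f (p x)).1 = (f x).1) ∧
      (∀ x, (f (q x)).2 = (f x).2) ∧ g = p * q := by
  push_neg at h
  have hα : ∀ x y, (f x).1 = (f y).1 → (f (g⁻¹ x)).2 = (f (g⁻¹ y)).2 → x = y := by
    intro x y h1 h2
    by_contra hne
    exact h x y hne h1 h2
  have hcell := key_comb hinj hY g⁻¹ hα
  have hex : ∀ x, ∃ z, f z = ((f x).1, (f (g⁻¹ x)).2) := fun x => (hY _).mp (hcell x)
  choose p0 hp0 using hex
  have hp0inj : Function.Injective p0 := by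
    intro x y hxy
    have hpair : ((f x).1, (f (g⁻¹ x)).2) = ((f y).1, (f (g⁻¹ y)).2) := by
      rw [← hp0 x, ← hp0 y, hxy]
    exact hα x y (congrArg Prod.fst hpair : _) (congrArg Prod.snd hpair : _)
  let P : Equiv.Perm (Fin b) := Equiv.ofBijective p0 (Finite.injective_iff_bijective.mp hp0inj)
  have hProw : ∀ x, (f (P x)).1 = (f x).1 := by
    intro x
    have := hp0 x
    show (f (p0 x)).1 = (f x).1
    rw [this]
  have hPcol : ∀ x, (f (P x)).2 = (f (g⁻¹ x)).2 := by
    intro x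
    have := hp0 x
    show (f (p0 x)).2 = (f (g⁻¹ x)).2
    rw [this]
  refine ⟨P⁻¹, P * g, ?_, ?_, by group⟩
  · intro x
    have h2 := hProw (P⁻¹ x)
    rw [Equiv.Perm.inv_def, Equiv.apply_symm_apply] at h2
    exact h2.symm
  · intro x
    have h1 : (f ((P * g) x)).2 = (f (g⁻¹ (g x))).2 := hPcol (g x)
    rwa [Equiv.Perm.inv_def, Equiv.symm_apply_apply] at h1

end YoungSymAux

namespace YoungSymAux2

variable {b : ℕ}

local notation "G" => Equiv.Perm (Fin b)

noncomputable def sgn (τ : Equiv.Perm (Fin b)) : ℚ := ((Equiv.Perm.sign τ : ℤ) : ℚ)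

theorem sgn_mul (σ τ : Equiv.Perm (Fin b)) : sgn (σ * τ) = sgn σ * sgn τ := by
  unfold sgn
  rw [map_mul]
  push_cast
  ring

theorem sgn_one : sgn (1 : Equiv.Perm (Fin b)) = 1 := by unfold sgn; simp

theorem sgn_mul_self (τ : Equiv.Perm (Fin b)) : sgn τ * sgn τ = 1 := by
  unfold sgn
  rcases Int.units_eq_one_or (Equiv.Perm.sign τ) with h | h <;> rw [h] <;> norm_num

theorem sgn_inv (τ : Equiv.Perm (Fin b)) : sgn τ⁻¹ = sgn τ := by
  unfold sgn; rw [map_inv]; rcases Int.units_eq_one_or (Equiv.Perm.sign τ) with h | h <;>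
    rw [h] <;> norm_num

end YoungSymAux2

namespace YoungSymAux2

variable {b : ℕ}

theorem main_alg (R C : Finset (Equiv.Perm (Fin b)))
    (hR1 : (1 : Equiv.Perm (Fin b)) ∈ R)
    (hRm : ∀ p ∈ R, ∀ p' ∈ R, p * p' ∈ R) (hRi : ∀ p ∈ R, p⁻¹ ∈ R)
    (hC1 : (1 : Equiv.Perm (Fin b)) ∈ C)
    (hCm : ∀ q ∈ C, ∀ q' ∈ C, q * q' ∈ C) (hCi : ∀ q ∈ C, q⁻¹ ∈ C)
    (htriv : ∀ g, g ∈ R → g ∈ C → g = 1)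
    (hswap : ∀ g : Equiv.Perm (Fin b), (∀ p ∈ R, ∀ q ∈ C, p * q ≠ g) →
      ∃ t q, t ∈ R ∧ q ∈ C ∧ sgn q = -1 ∧ t * g = g * q) :
    ∃ c : ℚ, c ≠ 0 ∧
      (c • ((∑ σ ∈ R, MonoidAlgebra.single σ (1:ℚ)) * (∑ τ ∈ C, MonoidAlgebra.single τ (sgn τ))))
        * (c • ((∑ σ ∈ R, MonoidAlgebra.single σ (1:ℚ)) * (∑ τ ∈ C, MonoidAlgebra.single τ (sgn τ))))
      = c • ((∑ σ ∈ R, MonoidAlgebra.single σ (1:ℚ)) * (∑ τ ∈ C, MonoidAlgebra.single τ (sgn τ))) := by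
  classical
  set ya : MonoidAlgebra ℚ (Equiv.Perm (Fin b)) := ∑ σ ∈ R, MonoidAlgebra.single σ (1:ℚ) with hya
  set yb : MonoidAlgebra ℚ (Equiv.Perm (Fin b)) := ∑ τ ∈ C, MonoidAlgebra.single τ (sgn τ) with hyb
  set y : MonoidAlgebra ℚ (Equiv.Perm (Fin b)) := ya * yb with hy
  set z : MonoidAlgebra ℚ (Equiv.Perm (Fin b)) := y * y with hz
  -- L1 : left absorption for ya
  have L1 : ∀ p ∈ R, MonoidAlgebra.single p (1:ℚ) * ya = ya := by
    intro p hp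
    rw [hya, Finset.mul_sum]
    refine Finset.sum_nbij' (fun σ => p * σ) (fun σ => p⁻¹ * σ)
      (fun σ hσ => hRm p hp σ hσ) (fun σ hσ => hRm p⁻¹ (hRi p hp) σ hσ)
      (fun σ _ => inv_mul_cancel_left p σ) (fun σ _ => mul_inv_cancel_left p σ)
      (fun σ _ => ?_)
    rw [MonoidAlgebra.single_mul_single, one_mul]
  -- L2 : right absorption for yb
  have L2 : ∀ q ∈ C, yb * MonoidAlgebra.single q (1:ℚ) = sgn q • yb := by
    intro q hq
    rw [hyb, Finset.sum_mul, Finset.smul_sum]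
    refine Finset.sum_nbij' (fun τ => τ * q) (fun τ => τ * q⁻¹)
      (fun τ hτ => hCm τ hτ q hq) (fun τ hτ => hCm τ hτ q⁻¹ (hCi q hq))
      (fun τ _ => mul_inv_cancel_right τ q) (fun τ _ => inv_mul_cancel_right τ q)
      (fun τ _ => ?_)
    rw [MonoidAlgebra.single_mul_single, mul_one, MonoidAlgebra.smul_single', sgn_mul]
    congr 1
    rw [mul_comm (sgn τ) (sgn q), ← mul_assoc, sgn_mul_self, one_mul]
  have hyL : ∀ p ∈ R, MonoidAlgebra.single p (1:ℚ) * y = y := by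
    intro p hp; rw [hy, ← mul_assoc, L1 p hp]
  have hyR : ∀ q ∈ C, y * MonoidAlgebra.single q (1:ℚ) = sgn q • y := by
    intro q hq; rw [hy, mul_assoc, L2 q hq, mul_smul_comm]
  have hzL : ∀ p ∈ R, MonoidAlgebra.single p (1:ℚ) * z = z := by
    intro p hp; rw [hz, ← mul_assoc, hyL p hp]
  have hzR : ∀ q ∈ C, z * MonoidAlgebra.single q (1:ℚ) = sgn q • z := by
    intro q hq; rw [hz, mul_assoc, hyR q hq, mul_smul_comm]
  -- coefficientwise versions
  have hzLc : ∀ p ∈ R, ∀ g, z.coeff (p * g) = z.coeff g := by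
    intro p hp g
    have h1 : (MonoidAlgebra.single p⁻¹ (1:ℚ) * z).coeff g = z.coeff g := by rw [hzL p⁻¹ (hRi p hp)]
    rw [MonoidAlgebra.coeff_single_mul_apply, inv_inv, one_mul] at h1
    exact h1
  have hzRc : ∀ q ∈ C, ∀ g, z.coeff (g * q) = sgn q * z.coeff g := by
    intro q hq g
    have h1 : (z * MonoidAlgebra.single q (1:ℚ)).coeff (g * q) = (sgn q • z).coeff (g * q) := by
      rw [hzR q hq]
    rw [MonoidAlgebra.coeff_mul_single_apply, mul_inv_cancel_right, mul_one] at h1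
    rw [MonoidAlgebra.coeff_smul_apply, smul_eq_mul] at h1
    have h2 : sgn q * z.coeff g = sgn q * (sgn q * z.coeff (g * q)) := by rw [← h1]
    rw [← mul_assoc, sgn_mul_self, one_mul] at h2
    exact h2.symm
  -- double sum representation of y
  have hy_rep : y = ∑ p ∈ R, ∑ q ∈ C, MonoidAlgebra.single (p * q) (sgn q) := by
    rw [hy, hya, hyb, Finset.sum_mul_sum]
    exact Finset.sum_congr rfl fun p _ => Finset.sum_congr rfl fun q _ => by
      rw [MonoidAlgebra.single_mul_single, one_mul]
  -- unique decomposition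
  have huniq : ∀ p ∈ R, ∀ q ∈ C, ∀ p' ∈ R, ∀ q' ∈ C, p' * q' = p * q → p' = p ∧ q' = q := by
    intro p hp q hq p' hp' q' hq' hpq
    have heq : p⁻¹ * p' = q * q'⁻¹ := by
      have h2 : p⁻¹ * (p' * q') * q'⁻¹ = p⁻¹ * (p * q) * q'⁻¹ := by rw [hpq]
      simpa [mul_assoc] using h2
    have hd1 : p⁻¹ * p' ∈ R := hRm _ (hRi p hp) _ hp'
    have hd2 : p⁻¹ * p' ∈ C := heq ▸ hCm q hq q'⁻¹ (hCi q' hq')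
    have hd : p⁻¹ * p' = 1 := htriv _ hd1 hd2
    have hpp : p' = p := by
      have := inv_mul_eq_one.mp hd; exact this.symm
    refine ⟨hpp, ?_⟩
    rw [hpp] at hpq
    exact mul_left_cancel hpq
  -- y coefficients
  have hy1 : y.coeff 1 = 1 := by
    rw [hy_rep, MonoidAlgebra.coeff_sum, Finset.sum_apply']
    rw [Finset.sum_eq_single_of_mem 1 hR1]
    · rw [MonoidAlgebra.coeff_sum, Finset.sum_apply', Finset.sum_eq_single_of_mem 1 hC1]
      · rw [one_mul, MonoidAlgebra.coeff_single, Finsupp.single_eq_same, sgn_one]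
      · intro q hq hne
        rw [MonoidAlgebra.coeff_single]; apply Finsupp.single_eq_of_ne
        rw [one_mul]; exact Ne.symm hne
    · intro p hp hne
      rw [MonoidAlgebra.coeff_sum, Finset.sum_apply']
      apply Finset.sum_eq_zero
      intro q hq
      rw [MonoidAlgebra.coeff_single]; apply Finsupp.single_eq_of_ne
      intro hcon
      obtain ⟨h1, _⟩ := huniq 1 hR1 1 hC1 p hp q hq (by rw [← hcon, one_mul])
      exact hne h1
  have hyval : ∀ p ∈ R, ∀ q ∈ C, y.coeff (p * q) = sgn q := by
    intro p hp q hq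
    rw [hy_rep, MonoidAlgebra.coeff_sum, Finset.sum_apply']
    rw [Finset.sum_eq_single_of_mem p hp]
    · rw [MonoidAlgebra.coeff_sum, Finset.sum_apply', Finset.sum_eq_single_of_mem q hq]
      · rw [MonoidAlgebra.coeff_single]; exact Finsupp.single_eq_same
      · intro q' hq' hne
        rw [MonoidAlgebra.coeff_single]; apply Finsupp.single_eq_of_ne
        intro hcon
        exact hne (mul_left_cancel hcon.symm)
    · intro p' hp' hne
      rw [MonoidAlgebra.coeff_sum, Finset.sum_apply']
      apply Finset.sum_eq_zero
      intro q' hq'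
      rw [MonoidAlgebra.coeff_single]; apply Finsupp.single_eq_of_ne
      intro hcon
      exact hne (huniq p hp q hq p' hp' q' hq' hcon.symm).1
  have hy0 : ∀ g, (∀ p ∈ R, ∀ q ∈ C, p * q ≠ g) → y.coeff g = 0 := by
    intro g hg
    rw [hy_rep, MonoidAlgebra.coeff_sum, Finset.sum_apply']
    apply Finset.sum_eq_zero
    intro p hp
    rw [MonoidAlgebra.coeff_sum, Finset.sum_apply']
    apply Finset.sum_eq_zero
    intro q hq
    rw [MonoidAlgebra.coeff_single]; exact Finsupp.single_eq_of_ne (Ne.symm (hg p hp q hq))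
  -- pointwise structure of z
  have hzy : ∀ g, z.coeff g = z.coeff 1 * y.coeff g := by
    intro g
    by_cases hg : ∃ p, p ∈ R ∧ ∃ q, q ∈ C ∧ g = p * q
    · obtain ⟨p, hp, q, hq, rfl⟩ := hg
      have h1 : z.coeff (p * q) = z.coeff q := hzLc p hp q
      have h2 : z.coeff (1 * q) = sgn q * z.coeff 1 := hzRc q hq 1
      rw [one_mul] at h2
      rw [h1, h2, hyval p hp q hq, mul_comm]
    · push_neg at hg
      have hg' : ∀ p ∈ R, ∀ q ∈ C, p * q ≠ g := by
        intro p hp q hq hcon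
        exact hg p hp q hq hcon.symm
      have hy0g : y.coeff g = 0 := hy0 g hg'
      obtain ⟨t, q, ht, hq, hsq, hcomm⟩ := hswap g hg'
      have h1 : z.coeff (t * g) = z.coeff g := hzLc t ht g
      have h2 : z.coeff (g * q) = sgn q * z.coeff g := hzRc q hq g
      rw [hcomm, h2, hsq] at h1
      have h3 : z.coeff g = 0 := by linarith
      rw [h3, hy0g, mul_zero]
  have hz_eq : z = z.coeff 1 • y := by
    apply MonoidAlgebra.ext
    apply Finsupp.ext
    intro g
    rw [MonoidAlgebra.coeff_smul_apply, smul_eq_mul, hzy g]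
  -- nonvanishing of z 1 via trace argument
  have hk0 : z.coeff 1 ≠ 0 := by
    intro hk
    have hzz : y * y = 0 := by rw [← hz, hz_eq, hk, zero_smul]
    haveI : Module.Free ℚ (MonoidAlgebra ℚ (Equiv.Perm (Fin b))) :=
      Module.Free.of_basis (MonoidAlgebra.basis (Equiv.Perm (Fin b)) ℚ)
    haveI : Module.Finite ℚ (MonoidAlgebra ℚ (Equiv.Perm (Fin b))) :=
      Module.Finite.of_basis (MonoidAlgebra.basis (Equiv.Perm (Fin b)) ℚ)
    have hnil : IsNilpotent (LinearMap.mulRight ℚ y) := by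
      refine ⟨2, ?_⟩
      rw [pow_two, Module.End.mul_eq_comp, ← LinearMap.mulRight_mul, hzz]
      ext v
      simp
    have htr := LinearMap.isNilpotent_trace_of_isNilpotent hnil
    -- compute the trace
    let bas : Module.Basis (Equiv.Perm (Fin b)) ℚ (MonoidAlgebra ℚ (Equiv.Perm (Fin b))) :=
      MonoidAlgebra.basis (Equiv.Perm (Fin b)) ℚ
    have htrace : LinearMap.trace ℚ (MonoidAlgebra ℚ (Equiv.Perm (Fin b)))
        (LinearMap.mulRight ℚ y) = (Fintype.card (Equiv.Perm (Fin b)) : ℚ) := by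
      rw [LinearMap.trace_eq_matrix_trace ℚ bas]
      rw [Matrix.trace]
      have hdiag : ∀ g : Equiv.Perm (Fin b),
          (LinearMap.toMatrix bas bas (LinearMap.mulRight ℚ y)) g g = y.coeff 1 := by
        intro g
        rw [LinearMap.toMatrix_apply]
        have hbg : bas g = MonoidAlgebra.single g 1 := rfl
        rw [hbg]
        have : (LinearMap.mulRight ℚ y) (MonoidAlgebra.single g 1)
            = MonoidAlgebra.single g 1 * y := rfl
        rw [this]
        have hrepr : bas.repr (MonoidAlgebra.single g (1:ℚ) * y)
            = (MonoidAlgebra.single g (1:ℚ) * y).coeff := rfl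
        rw [hrepr]
        show (MonoidAlgebra.single g (1:ℚ) * y).coeff g = y.coeff 1
        rw [MonoidAlgebra.coeff_single_mul_apply, inv_mul_cancel, one_mul]
      calc ∑ g, (LinearMap.toMatrix bas bas (LinearMap.mulRight ℚ y)) g g
          = ∑ g : Equiv.Perm (Fin b), y.coeff 1 := Finset.sum_congr rfl fun g _ => hdiag g
        _ = (Fintype.card (Equiv.Perm (Fin b)) : ℚ) := by
            rw [Finset.sum_const, hy1, Finset.card_univ, nsmul_eq_mul, mul_one]
    rw [htrace] at htr
    have hzero := htr.eq_zero
    exact (Nat.cast_ne_zero (R := ℚ)).mpr Fintype.card_ne_zero hzero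
  -- conclude
  have key : y * y = z.coeff 1 • y := by rw [← hz]; exact hz_eq
  refine ⟨(z.coeff 1)⁻¹, inv_ne_zero hk0, ?_⟩
  show ((z.coeff 1)⁻¹ • y) * ((z.coeff 1)⁻¹ • y) = (z.coeff 1)⁻¹ • y
  calc ((z.coeff 1)⁻¹ • y) * ((z.coeff 1)⁻¹ • y)
      = ((z.coeff 1)⁻¹ * (z.coeff 1)⁻¹) • (y * y) := by
        rw [smul_mul_assoc, mul_smul_comm, smul_smul]
    _ = (((z.coeff 1)⁻¹ * (z.coeff 1)⁻¹) * z.coeff 1) • y := by rw [key, smul_smul]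
    _ = (z.coeff 1)⁻¹ • y := by
        congr 1
        field_simp
end YoungSymAux2

open YoungSymAux YoungSymAux2

/-- For the Young symmetrizer `y_λ = a_λ·b_λ ∈ ℚ[S_b]` attached to the standard
filling `f : Fin b → ℕ × ℕ` of a Young diagram `Y` with `b` cells (`f x = (row, column)` of the
entry `x`, enumerated in row-major order), there is a nonzero rational `c_λ` with
`(c_λ·y_λ)² = c_λ·y_λ`; i.e. a suitable rational multiple of `y_λ` is idempotent. -/
theorem young_symmetrizer_idempotent (b : ℕ) (hb : 0 < b)
    (f : Fin b → ℕ × ℕ) (hinj : Function.Injective f)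
    (Y : YoungDiagram) (hY : ∀ p, p ∈ Y.cells ↔ ∃ x, f x = p)
    (hstd : ∀ x y : Fin b, x < y →
      (f x).1 < (f y).1 ∨ ((f x).1 = (f y).1 ∧ (f x).2 < (f y).2)) :
    ∃ c : ℚ, c ≠ 0 ∧
      ∀ (R Cg : Finset (Equiv.Perm (Fin b)))
        (hR : ∀ σ, σ ∈ R ↔ ∀ x, (f (σ x)).1 = (f x).1)
        (hC : ∀ τ, τ ∈ Cg ↔ ∀ x, (f (τ x)).2 = (f x).2)
        (a bl : MonoidAlgebra ℚ (Equiv.Perm (Fin b)))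
        (ha : a = ∑ σ ∈ R, MonoidAlgebra.of ℚ (Equiv.Perm (Fin b)) σ)
        (hbl : bl = ∑ τ ∈ Cg,
          ((Equiv.Perm.sign τ : ℤ) : ℚ) • MonoidAlgebra.of ℚ (Equiv.Perm (Fin b)) τ),
        (c • (a * bl)) * (c • (a * bl)) = c • (a * bl) := by
  classical
  set R0 : Finset (Equiv.Perm (Fin b)) :=
    univ.filter (fun σ => ∀ x, (f (σ x)).1 = (f x).1) with hR0
  set C0 : Finset (Equiv.Perm (Fin b)) :=
    univ.filter (fun τ => ∀ x, (f (τ x)).2 = (f x).2) with hC0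
  have memR : ∀ σ, σ ∈ R0 ↔ ∀ x, (f (σ x)).1 = (f x).1 := by
    intro σ; rw [hR0, Finset.mem_filter]; simp
  have memC : ∀ τ, τ ∈ C0 ↔ ∀ x, (f (τ x)).2 = (f x).2 := by
    intro τ; rw [hC0, Finset.mem_filter]; simp
  -- group closure facts
  have hR1 : (1 : Equiv.Perm (Fin b)) ∈ R0 := (memR 1).mpr (fun x => rfl)
  have hC1 : (1 : Equiv.Perm (Fin b)) ∈ C0 := (memC 1).mpr (fun x => rfl)
  have hRm : ∀ p ∈ R0, ∀ p' ∈ R0, p * p' ∈ R0 := by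
    intro p hp p' hp'
    rw [memR] at *
    intro x
    rw [Equiv.Perm.mul_apply, hp (p' x), hp' x]
  have hCm : ∀ q ∈ C0, ∀ q' ∈ C0, q * q' ∈ C0 := by
    intro p hp p' hp'
    rw [memC] at *
    intro x
    rw [Equiv.Perm.mul_apply, hp (p' x), hp' x]
  have hRi : ∀ p ∈ R0, p⁻¹ ∈ R0 := by
    intro p hp
    rw [memR] at *
    intro x
    have := hp (p⁻¹ x)
    rw [Equiv.Perm.inv_def, Equiv.apply_symm_apply] at this
    exact this.symm
  have hCi : ∀ q ∈ C0, q⁻¹ ∈ C0 := by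
    intro p hp
    rw [memC] at *
    intro x
    have := hp (p⁻¹ x)
    rw [Equiv.Perm.inv_def, Equiv.apply_symm_apply] at this
    exact this.symm
  have htriv : ∀ g, g ∈ R0 → g ∈ C0 → g = 1 := by
    intro g hgR hgC
    rw [memR] at hgR
    rw [memC] at hgC
    apply Equiv.ext
    intro x
    apply hinj
    exact Prod.ext (hgR x) (hgC x)
  have hswap : ∀ g : Equiv.Perm (Fin b), (∀ p ∈ R0, ∀ q ∈ C0, p * q ≠ g) →
      ∃ t q, t ∈ R0 ∧ q ∈ C0 ∧ sgn q = -1 ∧ t * g = g * q := by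
    intro g hg
    have hno : ¬ ∃ p q : Equiv.Perm (Fin b), (∀ x, (f (p x)).1 = (f x).1) ∧
        (∀ x, (f (q x)).2 = (f x).2) ∧ g = p * q := by
      rintro ⟨p, q, hp, hq, rfl⟩
      exact hg p ((memR p).mpr hp) q ((memC q).mpr hq) rfl
    have hpair : ∃ x y : Fin b, x ≠ y ∧ (f x).1 = (f y).1 ∧
        (f (g⁻¹ x)).2 = (f (g⁻¹ y)).2 := by
      by_contra hcon
      exact hno (decomp hinj hY g hcon)
    obtain ⟨x, y, hne, hrow, hcol⟩ := hpair
    refine ⟨Equiv.swap x y, g⁻¹ * Equiv.swap x y * g, ?_, ?_, ?_, ?_⟩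
    · rw [memR]
      intro w
      rcases eq_or_ne w x with rfl | hwx
      · rw [Equiv.swap_apply_left]; exact hrow.symm
      rcases eq_or_ne w y with rfl | hwy
      · rw [Equiv.swap_apply_right]; exact hrow
      · rw [Equiv.swap_apply_of_ne_of_ne hwx hwy]
    · rw [memC]
      intro w
      rw [Equiv.Perm.mul_apply, Equiv.Perm.mul_apply]
      rcases eq_or_ne (g w) x with hgw | hwx
      · rw [hgw, Equiv.swap_apply_left, ← hcol, ← hgw, Equiv.Perm.inv_def, Equiv.symm_apply_apply]
      rcases eq_or_ne (g w) y with hgw | hwy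
      · rw [hgw, Equiv.swap_apply_right, hcol, ← hgw, Equiv.Perm.inv_def, Equiv.symm_apply_apply]
      · rw [Equiv.swap_apply_of_ne_of_ne hwx hwy, Equiv.Perm.inv_def, Equiv.symm_apply_apply]
    · rw [sgn_mul, sgn_mul, sgn_inv]
      have hsw : sgn (Equiv.swap x y) = -1 := by
        unfold YoungSymAux2.sgn
        rw [Equiv.Perm.sign_swap hne]
        norm_num
      rw [hsw, mul_comm (sgn g * -1) (sgn g), ← mul_assoc, sgn_mul_self]
      ring
    · group
  obtain ⟨c, hc0, hcid⟩ := main_alg R0 C0 hR1 hRm hRi hC1 hCm hCi htriv hswap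
  refine ⟨c, hc0, ?_⟩
  intro R Cg hR hC a bl ha hbl
  have hReq : R = R0 := by
    ext σ; rw [hR σ, memR σ]
  have hCeq : Cg = C0 := by
    ext τ; rw [hC τ, memC τ]
  have haeq : a = ∑ σ ∈ R0, MonoidAlgebra.single σ (1:ℚ) := by
    rw [ha, hReq]
    exact Finset.sum_congr rfl fun σ _ => rfl
  have hbleq : bl = ∑ τ ∈ C0, MonoidAlgebra.single τ (sgn τ) := by
    rw [hbl, hCeq]
    refine Finset.sum_congr rfl fun τ _ => ?_
    rw [MonoidAlgebra.of_apply, MonoidAlgebra.smul_single']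
    unfold YoungSymAux2.sgn
    rw [mul_one]
  rw [haeq, hbleq]
  exact hcid
end

section
/- Let V = ℝ³ with the standard Euclidean inner product and let e ∈ V be a unit vector. For any natural number b, the orthogonal projection of e^{⊗b} ∈ V^{⊗b} onto the subspace of 'harmonic' (traceless) tensors — i.e. the intersection of the kernels of all contraction maps C_{ij} : V^{⊗b} → V^{⊗(b−2)} pairing the i-th and j-th factors (1 ≤ i < j ≤ b) — is nonzero. Equivalently, the constant q_λ = ([e^{⊗b}], [e^{⊗b}]) is a positive real number. -/
open Function

/-- The contraction `C_{ij}` pairing the `i`-th and `j`-th tensor factors, in the concrete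
coordinate model where `V^{⊗b}` (for `V = ℝ³` Euclidean with orthonormal standard basis) is
`EuclideanSpace ℝ (Fin b → Fin 3)`: `(C_{ij}T)(g) = Σ_s T(g[i ↦ s][j ↦ s])`. -/
noncomputable def tensorContraction (b : ℕ) (i j : Fin b) :
    EuclideanSpace ℝ (Fin b → Fin 3) →ₗ[ℝ] ((Fin b → Fin 3) → ℝ) where
  toFun T g := ∑ s : Fin 3, T (Function.update (Function.update g i s) j s)
  map_add' T T' := by
    funext g
    simp [Finset.sum_add_distrib]
  map_smul' c T := by
    funext g
    simp [Finset.mul_sum]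

/-- The subspace of harmonic (traceless) tensors: the intersection of the kernels of all
contractions `C_{ij}` with `i < j`. -/
noncomputable def harmonicTensors (b : ℕ) : Submodule ℝ (EuclideanSpace ℝ (Fin b → Fin 3)) :=
  ⨅ (i : Fin b) (j : Fin b) (_ : i < j), LinearMap.ker (tensorContraction b i j)

/-- Auxiliary: the sum of the contracted products of an isotropic vector vanishes. -/
theorem aux_contraction_vanish (b : ℕ) (w : Fin 3 → ℂ) (hww : ∑ s : Fin 3, w s * w s = 0)
    (i j : Fin b) (hij : i ≠ j) (g : Fin b → Fin 3) :
    ∑ s : Fin 3, ∏ k : Fin b, w (Function.update (Function.update g i s) j s k) = 0 := by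
  have key : ∀ s : Fin 3,
      ∏ k : Fin b, w (Function.update (Function.update g i s) j s k)
        = w s * w s * ∏ k ∈ (Finset.univ \ {j}) \ {i}, w (g k) := by
    intro s
    have h1 : (fun k => w (Function.update (Function.update g i s) j s k))
        = Function.update (Function.update (w ∘ g) i (w s)) j (w s) := by
      rw [← Function.comp_update, ← Function.comp_update]
      rfl
    calc ∏ k : Fin b, w (Function.update (Function.update g i s) j s k)
        = ∏ k : Fin b, Function.update (Function.update (w ∘ g) i (w s)) j (w s) k := by
          rw [h1]
      _ = w s * ∏ k ∈ Finset.univ \ {j}, Function.update (w ∘ g) i (w s) k :=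
          Finset.prod_update_of_mem (Finset.mem_univ j) _ _
      _ = w s * (w s * ∏ k ∈ (Finset.univ \ {j}) \ {i}, (w ∘ g) k) := by
          rw [Finset.prod_update_of_mem
            (Finset.mem_sdiff.2 ⟨Finset.mem_univ i, by simp [hij]⟩)]
      _ = w s * w s * ∏ k ∈ (Finset.univ \ {j}) \ {i}, w (g k) := by
          rw [mul_assoc]; rfl
  simp only [key, ← Finset.sum_mul, hww, zero_mul]

/-- Auxiliary: the pairing of `e^{⊗b}` with the real part of `w^{⊗b}` is `1`
when `∑ s, e s • w s = 1`. -/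
theorem aux_pairing (b : ℕ) (e : Fin 3 → ℝ) (w : Fin 3 → ℂ)
    (hwe : ∑ s : Fin 3, (e s : ℂ) * w s = 1) :
    ∑ g : Fin b → Fin 3, (∏ k : Fin b, e (g k)) * (∏ k : Fin b, w (g k)).re = 1 := by
  have step : ∀ g : Fin b → Fin 3,
      (∏ k : Fin b, e (g k)) * (∏ k : Fin b, w (g k)).re
        = (∏ k : Fin b, ((e (g k) : ℂ) * w (g k))).re := by
    intro g
    rw [Finset.prod_mul_distrib, ← Complex.ofReal_prod, Complex.re_ofReal_mul]
  simp only [step, ← Complex.re_sum, ← Fintype.sum_pow (fun s : Fin 3 => (e s : ℂ) * w s) b, hwe,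
    one_pow, Complex.one_re]

/-- for a unit vector `e ∈ ℝ³`, the orthogonal projection of `e^{⊗b}` onto the
harmonic tensors is nonzero; equivalently `q = ⟨[e^{⊗b}], [e^{⊗b}]⟩ > 0`. -/
theorem harmonic_projection_of_power_ne_zero (b : ℕ)
    (e : EuclideanSpace ℝ (Fin 3)) (he : ‖e‖ = 1) :
    Submodule.orthogonalProjectionOnto (harmonicTensors b)
        ((WithLp.equiv 2 ((Fin b → Fin 3) → ℝ)).symm fun g => ∏ k : Fin b, e (g k)) ≠ 0 ∧
      0 < (inner ℝ
          (↑(Submodule.orthogonalProjectionOnto (harmonicTensors b)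
            ((WithLp.equiv 2 ((Fin b → Fin 3) → ℝ)).symm fun g => ∏ k : Fin b, e (g k))) :
            EuclideanSpace ℝ (Fin b → Fin 3))
          (↑(Submodule.orthogonalProjectionOnto (harmonicTensors b)
            ((WithLp.equiv 2 ((Fin b → Fin 3) → ℝ)).symm fun g => ∏ k : Fin b, e (g k))) :
            EuclideanSpace ℝ (Fin b → Fin 3)) : ℝ) := by
  classical
  -- find a unit vector `f` orthogonal to `e`
  obtain ⟨f, hf1, hfe⟩ : ∃ f : EuclideanSpace ℝ (Fin 3), ‖f‖ = 1 ∧ inner ℝ e f = (0 : ℝ) := by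
    have hde : e ≠ 0 := by intro h0; rw [h0, norm_zero] at he; norm_num at he
    haveI : Fact (Module.finrank ℝ (EuclideanSpace ℝ (Fin 3)) = 2 + 1) := ⟨by simp⟩
    have h2 : Module.finrank ℝ ((ℝ ∙ e)ᗮ) = 2 := Submodule.finrank_orthogonal_span_singleton hde
    have hne : ((ℝ ∙ e)ᗮ : Submodule ℝ (EuclideanSpace ℝ (Fin 3))) ≠ ⊥ := by
      intro hb; rw [hb] at h2; simp at h2
    obtain ⟨f0, hf0m, hf0⟩ := Submodule.exists_mem_ne_zero_of_ne_bot hne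
    refine ⟨(‖f0‖⁻¹ : ℝ) • f0, ?_, ?_⟩
    · rw [norm_smul]; simp [norm_ne_zero_iff.2 hf0]
    · have := (Submodule.mem_orthogonal _ f0).1 hf0m e (Submodule.mem_span_singleton_self e)
      rw [inner_smul_right, this, mul_zero]
  -- basic coordinate identities
  have sum_e : ∑ s : Fin 3, e s * e s = 1 := by
    have h := real_inner_self_eq_norm_mul_norm e
    rw [he, one_mul, PiLp.inner_apply] at h
    simpa [PiLp.inner_apply, RCLike.inner_apply, conj_trivial, sq] using h
  have sum_f : ∑ s : Fin 3, f s * f s = 1 := by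
    have h := real_inner_self_eq_norm_mul_norm f
    rw [hf1, one_mul, PiLp.inner_apply] at h
    simpa [PiLp.inner_apply, RCLike.inner_apply, conj_trivial, sq] using h
  have sum_ef : ∑ s : Fin 3, e s * f s = 0 := by
    simpa [PiLp.inner_apply, RCLike.inner_apply, conj_trivial, mul_comm] using hfe
  -- the isotropic complex vector `w = e + i f`
  set w : Fin 3 → ℂ := fun s => (e s : ℂ) + (f s : ℂ) * Complex.I with hw
  have hww : ∑ s : Fin 3, w s * w s = 0 := by
    have he' : ∑ s : Fin 3, (e s : ℂ) * (e s : ℂ) = 1 := by exact_mod_cast sum_e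
    have hf' : ∑ s : Fin 3, (f s : ℂ) * (f s : ℂ) = 1 := by exact_mod_cast sum_f
    have hef' : ∑ s : Fin 3, (e s : ℂ) * (f s : ℂ) = 0 := by exact_mod_cast sum_ef
    simp only [hw, Fin.sum_univ_three] at he' hf' hef' ⊢
    linear_combination he' - hf' + 2 * Complex.I * hef' +
      ((f 0 : ℂ) ^ 2 + (f 1 : ℂ) ^ 2 + (f 2 : ℂ) ^ 2) * Complex.I_sq
  have hwe : ∑ s : Fin 3, (e s : ℂ) * w s = 1 := by
    have he' : ∑ s : Fin 3, (e s : ℂ) * (e s : ℂ) = 1 := by exact_mod_cast sum_e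
    have hef' : ∑ s : Fin 3, (e s : ℂ) * (f s : ℂ) = 0 := by exact_mod_cast sum_ef
    simp only [hw, Fin.sum_univ_three] at he' hef' ⊢
    linear_combination he' + Complex.I * hef'
  -- the harmonic tensor `h = Re(w^{⊗b})`
  set h : EuclideanSpace ℝ (Fin b → Fin 3) :=
    (WithLp.equiv 2 ((Fin b → Fin 3) → ℝ)).symm fun g => (∏ k : Fin b, w (g k)).re with hhdef
  have hmem : h ∈ harmonicTensors b := by
    rw [harmonicTensors]
    simp only [Submodule.mem_iInf, LinearMap.mem_ker]
    intro i j hij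
    funext g
    have hne : i ≠ j := ne_of_lt hij
    have hv := aux_contraction_vanish b w hww i j hne g
    simp only [tensorContraction, LinearMap.coe_mk, AddHom.coe_mk, hhdef,
      WithLp.equiv_symm_apply, PiLp.toLp_apply, Pi.zero_apply]
    rw [← Complex.re_sum, hv, Complex.zero_re]
  -- `x = e^{⊗b}` and its pairing with `h`
  set x : EuclideanSpace ℝ (Fin b → Fin 3) :=
    (WithLp.equiv 2 ((Fin b → Fin 3) → ℝ)).symm fun g => ∏ k : Fin b, e (g k) with hxdef
  have hxh : (inner ℝ x h : ℝ) = 1 := by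
    have := aux_pairing b (fun s => e s) w hwe
    simpa [PiLp.inner_apply, RCLike.inner_apply, conj_trivial, hxdef, hhdef,
      WithLp.equiv_symm_apply, PiLp.toLp_apply, mul_comm] using this
  -- the projection pairs with `h` the same way
  set p := Submodule.orthogonalProjectionOnto (harmonicTensors b) x with hpdef
  have hsub : (inner ℝ (x - (p : EuclideanSpace ℝ (Fin b → Fin 3))) h : ℝ) = 0 :=
    Submodule.inner_left_of_mem_orthogonal hmem
      (Submodule.sub_starProjection_mem_orthogonal (K := harmonicTensors b) x)
  have hph : (inner ℝ (p : EuclideanSpace ℝ (Fin b → Fin 3)) h : ℝ) = 1 := by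
    rw [inner_sub_left, hxh] at hsub
    linarith
  have hpne : (p : EuclideanSpace ℝ (Fin b → Fin 3)) ≠ 0 := by
    intro h0
    rw [h0, inner_zero_left] at hph
    norm_num at hph
  constructor
  · intro h0
    exact hpne (by rw [h0]; rfl)
  · rw [real_inner_self_eq_norm_sq]
    exact pow_pos (norm_pos_iff.mpr hpne) 2
end
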